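/- arXiv:2411.13257 — 8 statements merged into one kernel-verified Lean document; each statement's English description precedes it below -/
import Mathlib

section
/- Let K be a finite set, Ω = Ω_O × (K ∪ {∂}) with P the objective probability on Ω_O extended to the objective σ-field, X = |𝒳| where 𝒳 is a random subset of K with 0 ≤ P(𝒳 = ∅) < 1, and suppose the graph on K with edges {x,y} whenever P({x,y} ⊆ 𝒳) > 0 is connected. Then any probability P_A on (Ω, ℱ) satisfying (PN), (PI), and (PEI) is uniquely determined and satisfies P_A(F ∩ {S = x}) = (1/E[X]) · P(F ∩ {x ∈ 𝒳}) for all objective events F and all x ∈ K. -/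
open scoped Classical
open Finset

/-- Probability of a set under a weight function on a finite type. -/
noncomputable def pr {α : Type*} [Fintype α] (μ : α → ℝ) (A : Set α) : ℝ :=
  ∑ a : α, if a ∈ A then μ a else 0

/-- Conditional probability. -/
noncomputable def cpr {α : Type*} [Fintype α] (μ : α → ℝ) (A B : Set α) : ℝ :=
  pr μ (A ∩ B) / pr μ B

/-- Expectation. -/
noncomputable def ex {α : Type*} [Fintype α] (μ : α → ℝ) (f : α → ℝ) : ℝ :=
  ∑ a : α, μ a * f a

/-- A probability weight: nonnegative and summing to one. -/
def IsProb {α : Type*} [Fintype α] (μ : α → ℝ) : Prop :=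
  (∀ a, 0 ≤ μ a) ∧ ∑ a : α, μ a = 1

/-!
Write `q x = P_A(S = x)` and `p x = P(x ∈ 𝒳)`. By (PEI),
`P_A(F ∩ {S = x}) = (q x / p x) · P(F ∩ {x ∈ 𝒳})`. If `x, y` lie in a common configuration `B`
of positive probability, (PI) gives `P_A(S = x, 𝒳 = B) = P_A(S = y, 𝒳 = B)`, and comparing both
sides through (PEI) with `F = {𝒳 = B}` shows `q x / p x = q y / p y`. Connectedness makes this
ratio a constant `c`, and summing `q x = c · p x` over `x` gives `1 = c · E[X]`, since
`∑ₓ p x = E[X]` and, by (PN), `∑ₓ q x = 1`.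
-/
section WeightedSets

variable {α : Type*} [Fintype α] {μ : α → ℝ}

lemma pr_nonneg (hμ : ∀ a, 0 ≤ μ a) (A : Set α) : 0 ≤ pr μ A :=
  sum_nonneg fun a _ => by split_ifs <;> simp [hμ a]

lemma pr_mono (hμ : ∀ a, 0 ≤ μ a) {A B : Set α} (hAB : A ⊆ B) : pr μ A ≤ pr μ B :=
  sum_le_sum fun a _ => by
    by_cases ha : a ∈ A
    · simp [ha, hAB ha]
    · split_ifs <;> simp [hμ a]

lemma pr_add_pr_compl (A : Set α) : pr μ A + pr μ Aᶜ = ∑ a, μ a := by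
  rw [pr, pr, ← sum_add_distrib]
  refine sum_congr rfl fun a _ => ?_
  by_cases ha : a ∈ A <;> simp [ha]

lemma exists_pos_of_pr_pos {A : Set α} (h : 0 < pr μ A) : ∃ a ∈ A, 0 < μ a := by
  by_contra! hA
  have : pr μ A ≤ 0 := sum_nonpos fun a _ => by
    split_ifs with ha
    exacts [hA a ha, le_rfl]
  linarith

lemma pr_pos_of_mem (hμ : ∀ a, 0 ≤ μ a) {A : Set α} {a : α} (ha : a ∈ A) (hμa : 0 < μ a) :
    0 < pr μ A :=
  hμa.trans_le <| by
    simpa [pr] using pr_mono hμ (Set.singleton_subset_iff.mpr ha)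

lemma pr_inter_eq_cpr_mul (hμ : ∀ a, 0 ≤ μ a) (A B : Set α) :
    pr μ (A ∩ B) = cpr μ A B * pr μ B := by
  rcases (pr_nonneg hμ B).eq_or_lt with hB | hB
  · rw [← hB, mul_zero]
    exact le_antisymm (hB ▸ pr_mono hμ Set.inter_subset_right) (pr_nonneg hμ _)
  · rw [cpr, div_mul_cancel₀ _ hB.ne']

lemma sum_pr_fiber {β : Type*} [Fintype β] (f : α → β) :
    ∑ b, pr μ {a | f a = b} = ∑ a, μ a := by
  simp only [pr, Set.mem_ofPred_eq]
  rw [sum_comm]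
  simp

lemma sum_pr_mem_eq_ex_card {K : Type*} [Fintype K] (s : α → Finset K) :
    ∑ x, pr μ {a | x ∈ s a} = ex μ fun a => ((s a).card : ℝ) := by
  unfold pr ex
  rw [sum_comm]
  refine sum_congr rfl fun a _ => ?_
  convert (sum_ite_mem univ (s a) fun _ => μ a).trans ?_ <;> simp [mul_comm]

end WeightedSets

section Thirder

variable {Ω₀ K : Type*} [Fintype Ω₀] {P0 : Ω₀ → ℝ} {𝒳 : Ω₀ → Finset K}

lemma pr_mem_pos (hP0 : IsProb P0) (hne : pr P0 {o | 𝒳 o = ∅} < 1)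
    (hconn : ∀ x y : K,
      Relation.ReflTransGen (fun a b : K => 0 < pr P0 {o | a ∈ 𝒳 o ∧ b ∈ 𝒳 o}) x y)
    (x : K) :
    0 < pr P0 {o | x ∈ 𝒳 o} := by
  have hnonempty : 0 < pr P0 {o | 𝒳 o = ∅}ᶜ := by
    linarith [pr_add_pr_compl (μ := P0) {o | 𝒳 o = ∅}, hP0.2]
  obtain ⟨o, ho, hPo⟩ := exists_pos_of_pr_pos hnonempty
  obtain ⟨x₀, hx₀⟩ := nonempty_iff_ne_empty.mpr ho
  rcases (hconn x x₀).cases_head with rfl | ⟨z, hxz, -⟩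
  · exact pr_pos_of_mem hP0.1 hx₀ hPo
  · exact hxz.trans_le (pr_mono hP0.1 fun o' h => h.1)

variable [Fintype K]

def SatisfiesPEI (P0 : Ω₀ → ℝ) (𝒳 : Ω₀ → Finset K) (PA : Ω₀ × Option K → ℝ) : Prop :=
  ∀ (F : Set Ω₀) (x : K), 0 < pr PA {ω | ω.2 = some x} →
    cpr PA {ω | ω.1 ∈ F} {ω | ω.2 = some x} = cpr P0 F {o | x ∈ 𝒳 o}

def SatisfiesPI [DecidableEq K] (𝒳 : Ω₀ → Finset K) (PA : Ω₀ × Option K → ℝ) : Prop :=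
  ∀ (x : K) (B : Finset K), B ≠ ∅ → 0 < pr PA {ω | 𝒳 ω.1 = B} →
    cpr PA {ω | ω.2 = some x} {ω | 𝒳 ω.1 = B} = if x ∈ B then (B.card : ℝ)⁻¹ else 0

noncomputable def locationRatio (P0 : Ω₀ → ℝ) (𝒳 : Ω₀ → Finset K) (PA : Ω₀ × Option K → ℝ)
    (x : K) : ℝ :=
  pr PA {ω | ω.2 = some x} / pr P0 {o | x ∈ 𝒳 o}

variable {PA : Ω₀ × Option K → ℝ}

lemma pr_inter_location_eq (hPA : ∀ ω, 0 ≤ PA ω) (hPEI : SatisfiesPEI P0 𝒳 PA)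
    (F : Set Ω₀) (x : K) :
    pr PA ({ω | ω.1 ∈ F} ∩ {ω | ω.2 = some x})
      = locationRatio P0 𝒳 PA x * pr P0 (F ∩ {o | x ∈ 𝒳 o}) := by
  rw [pr_inter_eq_cpr_mul hPA, locationRatio]
  rcases (pr_nonneg hPA {ω : Ω₀ × Option K | ω.2 = some x}).eq_or_lt with hq | hq
  · simp [← hq]
  · rw [hPEI F x hq, cpr]
    ring

lemma pr_location_inter_config_eq [DecidableEq K] (hPA : ∀ ω, 0 ≤ PA ω)
    (hPI : SatisfiesPI 𝒳 PA) {B : Finset K} {x y : K} (hx : x ∈ B) (hy : y ∈ B) :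
    pr PA ({ω | ω.2 = some x} ∩ {ω | 𝒳 ω.1 = B})
      = pr PA ({ω | ω.2 = some y} ∩ {ω | 𝒳 ω.1 = B}) := by
  rw [pr_inter_eq_cpr_mul hPA, pr_inter_eq_cpr_mul hPA]
  rcases (pr_nonneg hPA {ω : Ω₀ × Option K | 𝒳 ω.1 = B}).eq_or_lt with hB | hB
  · simp [← hB]
  · have hBne : B ≠ ∅ := ne_empty_of_mem hx
    rw [hPI x B hBne hB, hPI y B hBne hB, if_pos hx, if_pos hy]

lemma locationRatio_eq_of_edge [DecidableEq K] (hP0 : ∀ o, 0 ≤ P0 o) (hPA : ∀ ω, 0 ≤ PA ω)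
    (hPI : SatisfiesPI 𝒳 PA) (hPEI : SatisfiesPEI P0 𝒳 PA)
    {x y : K} (hxy : 0 < pr P0 {o | x ∈ 𝒳 o ∧ y ∈ 𝒳 o}) :
    locationRatio P0 𝒳 PA x = locationRatio P0 𝒳 PA y := by
  obtain ⟨o, ⟨hx, hy⟩, ho⟩ := exists_pos_of_pr_pos hxy
  set F : Set Ω₀ := {o' | 𝒳 o' = 𝒳 o}
  have hF : 0 < pr P0 F := pr_pos_of_mem hP0 rfl ho
  have joint : ∀ z ∈ 𝒳 o, pr PA ({ω | ω.2 = some z} ∩ {ω | 𝒳 ω.1 = 𝒳 o})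
      = locationRatio P0 𝒳 PA z * pr P0 F := by
    intro z hz
    have hFz : F ∩ {o' | z ∈ 𝒳 o'} = F := Set.inter_eq_left.mpr fun o' h => by
      simpa [F, Set.mem_ofPred_eq.mp h] using hz
    rw [← hFz, ← pr_inter_location_eq hPA hPEI, Set.inter_comm]
    rfl
  have h := pr_location_inter_config_eq hPA hPI hx hy
  rw [joint x hx, joint y hy] at h
  exact mul_right_cancel₀ hF.ne' h

lemma locationRatio_eq [DecidableEq K] (hP0 : ∀ o, 0 ≤ P0 o) (hPA : ∀ ω, 0 ≤ PA ω)
    (hconn : ∀ x y : K,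
      Relation.ReflTransGen (fun a b : K => 0 < pr P0 {o | a ∈ 𝒳 o ∧ b ∈ 𝒳 o}) x y)
    (hPI : SatisfiesPI 𝒳 PA) (hPEI : SatisfiesPEI P0 𝒳 PA) (x y : K) :
    locationRatio P0 𝒳 PA x = locationRatio P0 𝒳 PA y := by
  induction hconn x y with
  | refl => rfl
  | tail _ hbc ih => exact ih.trans (locationRatio_eq_of_edge hP0 hPA hPI hPEI hbc)

lemma sum_pr_location_eq_one (hPA : IsProb PA)
    (hPN : pr PA {ω | ∃ x : K, ω.2 = some x ∧ x ∈ 𝒳 ω.1} = 1) :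
    ∑ x : K, pr PA {ω | ω.2 = some x} = 1 := by
  have hnone : pr PA {ω | ω.2 = none} = 0 := by
    have hle := pr_mono hPA.1 (A := {ω | ω.2 = none})
      (B := {ω | ∃ x : K, ω.2 = some x ∧ x ∈ 𝒳 ω.1}ᶜ) fun ω hω ⟨x, hx, _⟩ => by
        simp [Set.mem_ofPred_eq.mp hω] at hx
    linarith [pr_add_pr_compl (μ := PA) {ω | ∃ x : K, ω.2 = some x ∧ x ∈ 𝒳 ω.1}, hPA.2,
      pr_nonneg hPA.1 {ω : Ω₀ × Option K | ω.2 = none}]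
  have h := sum_pr_fiber (μ := PA) Prod.snd
  rw [Fintype.sum_option, hnone, zero_add, hPA.2] at h
  exact h

end Thirder

theorem stmt0_general {Ω₀ K : Type*} [Fintype Ω₀] [Fintype K] [DecidableEq K]
    (P0 : Ω₀ → ℝ) (𝒳 : Ω₀ → Finset K)
    (hP0 : IsProb P0)
    (hne : pr P0 {o | 𝒳 o = ∅} < 1)
    (hconn : ∀ x y : K,
      Relation.ReflTransGen (fun a b : K => 0 < pr P0 {o | a ∈ 𝒳 o ∧ b ∈ 𝒳 o}) x y)
    (PA : Ω₀ × Option K → ℝ) (hPA : IsProb PA)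
    -- (PN) part (b): the observer is located at an occupied cell
    (hPN2 : pr PA {ω | ∃ x : K, ω.2 = some x ∧ x ∈ 𝒳 ω.1} = 1)
    -- (PI)
    (hPI : ∀ (x : K) (B : Finset K), B ≠ ∅ →
      0 < pr PA {ω | 𝒳 ω.1 = B} →
      cpr PA {ω | ω.2 = some x} {ω | 𝒳 ω.1 = B} = if x ∈ B then (B.card : ℝ)⁻¹ else 0)
    -- (PEI)
    (hPEI : ∀ (F : Set Ω₀) (x : K), 0 < pr PA {ω | ω.2 = some x} →
      cpr PA {ω | ω.1 ∈ F} {ω | ω.2 = some x} = cpr P0 F {o | x ∈ 𝒳 o}) :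
    ∀ (F : Set Ω₀) (x : K),
      pr PA ({ω | ω.1 ∈ F} ∩ {ω | ω.2 = some x})
        = (ex P0 (fun o => ((𝒳 o).card : ℝ)))⁻¹ * pr P0 (F ∩ {o | x ∈ 𝒳 o}) := by
  intro F x
  have hratio : locationRatio P0 𝒳 PA x * ex P0 (fun o => ((𝒳 o).card : ℝ)) = 1 := by
    rw [← sum_pr_mem_eq_ex_card, mul_sum, ← sum_pr_location_eq_one hPA hPN2]
    refine sum_congr rfl fun y _ => ?_
    rw [locationRatio_eq hP0.1 hPA.1 hconn hPI hPEI x y, locationRatio,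
      div_mul_cancel₀ _ (pr_mem_pos hP0 hne hconn y).ne']
  rw [pr_inter_location_eq hPA.1 hPEI, eq_inv_of_mul_eq_one_left hratio]

/-- Theorem (uniqueness of the Thirder measure): any probability `PA` on the
extended space `Ω₀ × Option K` satisfying (PN), (PI) and (PEI) is given by
`PA(F ∩ {S = x}) = E[X]⁻¹ · P(F ∩ {x ∈ 𝒳})`, provided the graph on `K` with an
edge `{x,y}` whenever `P({x,y} ⊆ 𝒳) > 0` is connected. -/
theorem stmt0 {Ω₀ K : Type*} [Fintype Ω₀] [Fintype K] [DecidableEq K]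
    (P0 : Ω₀ → ℝ) (𝒳 : Ω₀ → Finset K)
    (hP0 : IsProb P0)
    (hne : pr P0 {o | 𝒳 o = ∅} < 1)
    (hconn : ∀ x y : K,
      Relation.ReflTransGen (fun a b : K => 0 < pr P0 {o | a ∈ 𝒳 o ∧ b ∈ 𝒳 o}) x y)
    (PA : Ω₀ × Option K → ℝ) (hPA : IsProb PA)
    -- (PN) part (a): objective null events are `PA`-null
    (hPN1 : ∀ F : Set Ω₀, pr P0 F = 0 → pr PA {ω | ω.1 ∈ F} = 0)
    -- (PN) part (b): the observer is located at an occupied cell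
    (hPN2 : pr PA {ω | ∃ x : K, ω.2 = some x ∧ x ∈ 𝒳 ω.1} = 1)
    -- (PI)
    (hPI : ∀ (x : K) (B : Finset K), B ≠ ∅ →
      0 < pr PA {ω | 𝒳 ω.1 = B} →
      cpr PA {ω | ω.2 = some x} {ω | 𝒳 ω.1 = B} = if x ∈ B then (B.card : ℝ)⁻¹ else 0)
    -- (PEI)
    (hPEI : ∀ (F : Set Ω₀) (x : K), 0 < pr PA {ω | ω.2 = some x} →
      cpr PA {ω | ω.1 ∈ F} {ω | ω.2 = some x} = cpr P0 F {o | x ∈ 𝒳 o}) :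
    ∀ (F : Set Ω₀) (x : K),
      pr PA ({ω | ω.1 ∈ F} ∩ {ω | ω.2 = some x})
        = (ex P0 (fun o => ((𝒳 o).card : ℝ)))⁻¹ * pr P0 (F ∩ {o | x ∈ 𝒳 o}) :=
  stmt0_general P0 𝒳 hP0 hne hconn PA hPA hPN2 hPI hPEI
end

section
/- For the Thirder measure P_E and any objective event F, P_E(F) = E[1_F · X] / E[X], where X = |𝒳|. In particular P_E(S = x) = Q_x / E[X] where Q_x = P(x ∈ 𝒳), and P_E(𝒳 = B) = |B| · P(𝒳 = B) / E[X] for B ⊆ K. -/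
open scoped Classical
open Finset

/-! Each awakening `(o, x)` with `x ∈ 𝒳 o` carries weight `P0 o / E[X]`, so the marginal of `P_E`
on the objective world `o` is `P0 o · |𝒳 o| / E[X]`; all three identities are sums of this
marginal, the last one because `|𝒳 o| = |B|` on the event `𝒳 = B`. -/

section WeightedSums

variable {α β : Type*} [Fintype α] [Fintype β]

theorem pr_const_mul (c : ℝ) (μ : α → ℝ) (A : Set α) :
    pr (fun a => c * μ a) A = c * pr μ A := by
  simp only [pr, mul_sum, mul_ite, mul_zero]

theorem pr_mul_eq_ex_indicator_mul (μ f : α → ℝ) (A : Set α) :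
    pr (fun a => μ a * f a) A = ex μ (fun a => (if a ∈ A then 1 else 0) * f a) := by
  refine sum_congr rfl fun a _ => ?_
  by_cases ha : a ∈ A <;> simp [ha]

theorem ex_indicator_mul_of_eqOn (μ f : α → ℝ) (A : Set α) (c : ℝ)
    (hf : Set.EqOn f (fun _ => c) A) :
    ex μ (fun a => (if a ∈ A then 1 else 0) * f a) = c * pr μ A := by
  rw [pr, mul_sum]
  refine sum_congr rfl fun a _ => ?_
  by_cases ha : a ∈ A
  · simp [ha, hf ha, mul_comm]
  · simp [ha]

theorem pr_fst_mem (μ : α × β → ℝ) (A : Set α) :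
    pr μ {ω | ω.1 ∈ A} = pr (fun a => ∑ b, μ (a, b)) A := by
  rw [pr, pr, Fintype.sum_prod_type]
  refine sum_congr rfl fun a _ => ?_
  split_ifs with ha <;> simp [ha]

theorem pr_snd_eq (μ : α × β → ℝ) (b : β) :
    pr μ {ω | ω.2 = b} = ∑ a, μ (a, b) := by
  rw [pr, Fintype.sum_prod_type]
  simp

end WeightedSums

theorem sum_option_eq_mul_card {α K : Type*} [Fintype K] [DecidableEq K]
    (μ : α × Option K → ℝ) (w : α → ℝ) (S : α → Finset K)
    (hsome : ∀ a x, μ (a, some x) = w a * if x ∈ S a then 1 else 0)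
    (hnone : ∀ a, μ (a, none) = 0) (a : α) :
    ∑ s, μ (a, s) = w a * (S a).card := by
  simp [Fintype.sum_option, hsome, hnone, mul_comm]

theorem stmt2_general {Ω₀ K : Type*} [Fintype Ω₀] [Fintype K] [DecidableEq K]
    (P0 : Ω₀ → ℝ) (𝒳 : Ω₀ → Finset K)
    (PE : Ω₀ × Option K → ℝ)
    (hPE1 : ∀ (o : Ω₀) (x : K),
      PE (o, some x) = (ex P0 (fun o' => ((𝒳 o').card : ℝ)))⁻¹ * P0 o *
        (if x ∈ 𝒳 o then 1 else 0))
    (hPE2 : ∀ o : Ω₀, PE (o, none) = 0) :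
    (∀ F : Set Ω₀,
      pr PE {ω | ω.1 ∈ F} =
        ex P0 (fun o => (if o ∈ F then 1 else 0) * ((𝒳 o).card : ℝ)) /
          ex P0 (fun o => ((𝒳 o).card : ℝ))) ∧
    (∀ x : K,
      pr PE {ω | ω.2 = some x} =
        pr P0 {o | x ∈ 𝒳 o} / ex P0 (fun o => ((𝒳 o).card : ℝ))) ∧
    (∀ B : Finset K,
      pr PE {ω | 𝒳 ω.1 = B} =
        (B.card : ℝ) * pr P0 {o | 𝒳 o = B} / ex P0 (fun o => ((𝒳 o).card : ℝ))) := by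
  set E := ex P0 (fun o => ((𝒳 o).card : ℝ))
  have marginal (o : Ω₀) : ∑ s, PE (o, s) = E⁻¹ * (P0 o * (𝒳 o).card) := by
    rw [sum_option_eq_mul_card PE _ 𝒳 hPE1 hPE2, mul_assoc]
  have objective (F : Set Ω₀) : pr PE {ω | ω.1 ∈ F} =
      ex P0 (fun o => (if o ∈ F then 1 else 0) * ((𝒳 o).card : ℝ)) / E := by
    rw [pr_fst_mem, funext marginal, pr_const_mul, pr_mul_eq_ex_indicator_mul, div_eq_inv_mul]
  refine ⟨objective, fun x => ?_, fun B => ?_⟩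
  · rw [pr_snd_eq, div_eq_inv_mul, pr, mul_sum]
    refine sum_congr rfl fun o _ => ?_
    by_cases hx : x ∈ 𝒳 o <;> simp [hPE1, hx]
  · rw [show {ω : Ω₀ × Option K | 𝒳 ω.1 = B} = {ω | ω.1 ∈ {o | 𝒳 o = B}} from rfl, objective,
      ex_indicator_mul_of_eqOn P0 (fun o => ((𝒳 o).card : ℝ)) {o | 𝒳 o = B} (B.card : ℝ)
        fun o (ho : 𝒳 o = B) => by simp only [ho]]

/-- Theorem: for the Thirder measure `P_E` and any objective event `F`,
`P_E(F) = E[1_F X]/E[X]`; in particular `P_E(S = x) = Q_x/E[X]` and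
`P_E(𝒳 = B) = |B|·P(𝒳 = B)/E[X]`. -/
theorem stmt2 {Ω₀ K : Type*} [Fintype Ω₀] [Fintype K] [DecidableEq K]
    (P0 : Ω₀ → ℝ) (𝒳 : Ω₀ → Finset K)
    (hP0 : IsProb P0)
    (hne : pr P0 {o | 𝒳 o = ∅} < 1)
    (PE : Ω₀ × Option K → ℝ)
    (hPE1 : ∀ (o : Ω₀) (x : K),
      PE (o, some x) = (ex P0 (fun o' => ((𝒳 o').card : ℝ)))⁻¹ * P0 o *
        (if x ∈ 𝒳 o then 1 else 0))
    (hPE2 : ∀ o : Ω₀, PE (o, none) = 0) :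
    (∀ F : Set Ω₀,
      pr PE {ω | ω.1 ∈ F} =
        ex P0 (fun o => (if o ∈ F then 1 else 0) * ((𝒳 o).card : ℝ)) /
          ex P0 (fun o => ((𝒳 o).card : ℝ))) ∧
    (∀ x : K,
      pr PE {ω | ω.2 = some x} =
        pr P0 {o | x ∈ 𝒳 o} / ex P0 (fun o => ((𝒳 o).card : ℝ))) ∧
    (∀ B : Finset K,
      pr PE {ω | 𝒳 ω.1 = B} =
        (B.card : ℝ) * pr P0 {o | 𝒳 o = B} / ex P0 (fun o => ((𝒳 o).card : ℝ))) :=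
  stmt2_general P0 𝒳 PE hPE1 hPE2
end

section
/- Let P̃(F) = P(F | 𝒳 ≠ ∅) be the objective probability conditioned on the existence of at least one observer, and let P̃_E be the measure defined by P̃_E(F ∩ {S=x}) = (1/Ẽ[X]) P̃(F ∩ {x ∈ 𝒳}). Then P̃_E = P_E, i.e. conditioning the objective law on 𝒳 ≠ ∅ does not change the Thirder measure. -/
open scoped Classical
open Finset

/-! Both `P_E` and `P̃_E` only see the objective law on `{𝒳 ≠ ∅}`, since elsewhere the observer count
`X = |𝒳|` and the indicator of `x ∈ 𝒳` vanish. There `P̃` is `P` rescaled by `1 / P(𝒳 ≠ ∅)`, and the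
normalisation by the expected observer count cancels that factor. -/

section ThirderWeight

variable {Ω₀ K : Type*} [Fintype Ω₀] {μ ν : Ω₀ → ℝ} {𝒳 : Ω₀ → Finset K} {c : ℝ}

theorem ex_card_eq_mul_of_eq_mul_on_ne_empty (h : ∀ o, 𝒳 o ≠ ∅ → ν o = c * μ o) :
    ex ν (fun o => ((𝒳 o).card : ℝ)) = c * ex μ (fun o => ((𝒳 o).card : ℝ)) := by
  rw [ex, ex, Finset.mul_sum]
  refine Finset.sum_congr rfl fun o _ => ?_
  by_cases ho : 𝒳 o = ∅
  · simp [ho]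
  · rw [h o ho, mul_assoc]

theorem inv_ex_card_mul_eq_of_eq_mul_on_ne_empty [DecidableEq K] (hc : c ≠ 0)
    (h : ∀ o, 𝒳 o ≠ ∅ → ν o = c * μ o) (o : Ω₀) (x : K) :
    (ex ν (fun o' => ((𝒳 o').card : ℝ)))⁻¹ * ν o * (if x ∈ 𝒳 o then 1 else 0) =
      (ex μ (fun o' => ((𝒳 o').card : ℝ)))⁻¹ * μ o * (if x ∈ 𝒳 o then 1 else 0) := by
  by_cases hx : x ∈ 𝒳 o
  · rw [ex_card_eq_mul_of_eq_mul_on_ne_empty h, h o (Finset.ne_empty_of_mem hx), mul_inv,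
      mul_mul_mul_comm, inv_mul_cancel₀ hc, one_mul]
  · simp [hx]

end ThirderWeight

theorem stmt3_general {Ω₀ K : Type*} [Fintype Ω₀] [Fintype K] [DecidableEq K]
    (P0 : Ω₀ → ℝ) (𝒳 : Ω₀ → Finset K)
    (hpos : 0 < pr P0 {o | 𝒳 o ≠ ∅})
    (PE : Ω₀ × Option K → ℝ)
    (hPE1 : ∀ (o : Ω₀) (x : K),
      PE (o, some x) = (ex P0 (fun o' => ((𝒳 o').card : ℝ)))⁻¹ * P0 o *
        (if x ∈ 𝒳 o then 1 else 0))
    (hPE2 : ∀ o : Ω₀, PE (o, none) = 0)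
    -- the conditioned objective law P̃
    (Pt : Ω₀ → ℝ)
    (hPt : ∀ o : Ω₀, Pt o = if 𝒳 o = ∅ then 0 else P0 o / pr P0 {o' | 𝒳 o' ≠ ∅})
    -- the Thirder measure P̃_E built from P̃
    (PtE : Ω₀ × Option K → ℝ)
    (hPtE1 : ∀ (o : Ω₀) (x : K),
      PtE (o, some x) = (ex Pt (fun o' => ((𝒳 o').card : ℝ)))⁻¹ * Pt o *
        (if x ∈ 𝒳 o then 1 else 0))
    (hPtE2 : ∀ o : Ω₀, PtE (o, none) = 0) :
    ∀ G : Set (Ω₀ × Option K), pr PtE G = pr PE G := by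
  have hPt_rescaled : ∀ o, 𝒳 o ≠ ∅ → Pt o = (pr P0 {o' | 𝒳 o' ≠ ∅})⁻¹ * P0 o := by
    intro o ho
    rw [hPt, if_neg ho, div_eq_inv_mul]
  have hweights : PtE = PE := by
    funext ⟨o, x⟩
    cases x with
    | none => rw [hPtE2, hPE2]
    | some x =>
      rw [hPtE1, hPE1]
      exact inv_ex_card_mul_eq_of_eq_mul_on_ne_empty (inv_ne_zero hpos.ne') hPt_rescaled o x
  intro G
  rw [hweights]

/-- Theorem: conditioning the objective law on `𝒳 ≠ ∅` does not change the
Thirder measure: with `P̃ = P(· | 𝒳 ≠ ∅)` and `P̃_E` the Thirder measure built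
from `P̃`, one has `P̃_E = P_E`. -/
theorem stmt3 {Ω₀ K : Type*} [Fintype Ω₀] [Fintype K] [DecidableEq K]
    (P0 : Ω₀ → ℝ) (𝒳 : Ω₀ → Finset K)
    (hP0 : IsProb P0)
    (hpos : 0 < pr P0 {o | 𝒳 o ≠ ∅})
    (PE : Ω₀ × Option K → ℝ)
    (hPE1 : ∀ (o : Ω₀) (x : K),
      PE (o, some x) = (ex P0 (fun o' => ((𝒳 o').card : ℝ)))⁻¹ * P0 o *
        (if x ∈ 𝒳 o then 1 else 0))
    (hPE2 : ∀ o : Ω₀, PE (o, none) = 0)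
    -- the conditioned objective law P̃
    (Pt : Ω₀ → ℝ)
    (hPt : ∀ o : Ω₀, Pt o = if 𝒳 o = ∅ then 0 else P0 o / pr P0 {o' | 𝒳 o' ≠ ∅})
    -- the Thirder measure P̃_E built from P̃
    (PtE : Ω₀ × Option K → ℝ)
    (hPtE1 : ∀ (o : Ω₀) (x : K),
      PtE (o, some x) = (ex Pt (fun o' => ((𝒳 o').card : ℝ)))⁻¹ * Pt o *
        (if x ∈ 𝒳 o then 1 else 0))
    (hPtE2 : ∀ o : Ω₀, PtE (o, none) = 0) :
    ∀ G : Set (Ω₀ × Option K), pr PtE G = pr PE G :=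
  stmt3_general P0 𝒳 hpos PE hPE1 hPE2 Pt hPt PtE hPtE1 hPtE2
end

section
/- If there exists a probability P_A on (Ω, ℱ) satisfying (PN), (PI), (PEI), and the Principal Principle (PP) (i.e. P_A(F) = P(F | 𝒳 ≠ ∅) for all objective F), and the graph on K is connected, then there exists an integer k such that P(|𝒳| = k | 𝒳 ≠ ∅) = 1. -/
/-!
Write `Z` for the event `𝒳 ≠ ∅`. For a configuration `B ∋ x` of positive probability, (PP) gives
`P_A(𝒳 = B) = P(𝒳 = B) / P(Z)`, (PI) splits this evenly among the `|B|` members of `B`, and (PEI)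
identifies the share of `x` as `P_A(x) · P(𝒳 = B) / P(x ∈ 𝒳)`. Hence
`|B| = P(x ∈ 𝒳) / (P(Z) · P_A(x))`, a quantity depending on `x` alone. Two observers who coexist
with positive probability therefore see the same value, and connectivity makes it the same for
all observers: every configuration of positive probability has the same size.
-/

open scoped Classical
open Finset

section FinitePr

variable {α : Type*} [Fintype α] {μ : α → ℝ}

lemma le_pr_of_mem (hμ : ∀ a, 0 ≤ μ a) {A : Set α} {a : α} (ha : a ∈ A) : μ a ≤ pr μ A := by
  have := Finset.single_le_sum (f := fun b => if b ∈ A then μ b else 0)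
    (fun b _ => by split_ifs <;> simp [hμ b]) (Finset.mem_univ a)
  rwa [if_pos ha] at this

lemma exists_mem_pos_of_pr_pos {A : Set α} (hA : 0 < pr μ A) : ∃ a ∈ A, 0 < μ a := by
  by_contra! hc
  exact hA.not_ge <| Finset.sum_nonpos fun a _ => by
    split_ifs with ha
    exacts [hc a ha, le_rfl]

lemma pr_inter_of_forall_ne_zero {A B : Set α} (h : ∀ a ∈ B, μ a ≠ 0 → a ∈ A) :
    pr μ (A ∩ B) = pr μ B :=
  Finset.sum_congr rfl fun a _ => by
    by_cases hB : a ∈ B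
    · by_cases h0 : μ a = 0
      · simp [h0]
      · simp [h a hB h0, hB]
    · simp [hB]

end FinitePr

section SleepingBeauty

variable {Ω₀ K : Type*} [Fintype Ω₀]

noncomputable def observerRatio [Fintype K] (P0 : Ω₀ → ℝ) (𝒳 : Ω₀ → Finset K)
    (PA : Ω₀ × Option K → ℝ) (x : K) : ℝ :=
  pr P0 {o | x ∈ 𝒳 o} / (pr P0 {o | 𝒳 o ≠ ∅} * pr PA {ω | ω.2 = some x})

lemma card_eq_observerRatio [Fintype K] {P0 : Ω₀ → ℝ} {𝒳 : Ω₀ → Finset K}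
    {PA : Ω₀ × Option K → ℝ}
    (hP0 : ∀ o, 0 ≤ P0 o) (hPA : ∀ ω, 0 ≤ PA ω) (hZ : 0 < pr P0 {o | 𝒳 o ≠ ∅})
    (hPI : ∀ (x : K) (B : Finset K), x ∈ B → 0 < pr PA {ω | 𝒳 ω.1 = B} →
      cpr PA {ω | ω.2 = some x} {ω | 𝒳 ω.1 = B} = (B.card : ℝ)⁻¹)
    (hPEI : ∀ (F : Set Ω₀) (x : K), 0 < pr PA {ω | ω.2 = some x} →
      cpr PA {ω | ω.1 ∈ F} {ω | ω.2 = some x} = cpr P0 F {o | x ∈ 𝒳 o})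
    (hPP : ∀ F : Set Ω₀, pr PA {ω | ω.1 ∈ F} = cpr P0 F {o | 𝒳 o ≠ ∅})
    {B : Finset K} {x : K} (hxB : x ∈ B) (hB : 0 < pr P0 {o | 𝒳 o = B}) :
    (B.card : ℝ) = observerRatio P0 𝒳 PA x := by
  rw [observerRatio]
  set pB := pr P0 {o | 𝒳 o = B}
  set pZ := pr P0 {o | 𝒳 o ≠ ∅}
  set qx := pr P0 {o | x ∈ 𝒳 o}
  set px := pr PA {ω | ω.2 = some x}
  set joint := pr PA ({ω | ω.2 = some x} ∩ {ω | 𝒳 ω.1 = B})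
  have hBZ : {o | 𝒳 o = B} ⊆ {o | 𝒳 o ≠ ∅} := by
    rintro o rfl
    exact ne_empty_of_mem hxB
  have hBx : {o | 𝒳 o = B} ⊆ {o | x ∈ 𝒳 o} := by
    rintro o rfl
    exact hxB
  have hPA_B : pr PA {ω | 𝒳 ω.1 = B} = pB / pZ := by
    have := hPP {o | 𝒳 o = B}
    rwa [cpr, Set.inter_eq_self_of_subset_left hBZ] at this
  have hPA_B_pos : 0 < pr PA {ω | 𝒳 ω.1 = B} := hPA_B ▸ div_pos hB hZ
  have hcard : (0 : ℝ) < B.card := by exact_mod_cast card_pos.mpr ⟨x, hxB⟩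
  have hjoint : joint = (B.card : ℝ)⁻¹ * (pB / pZ) := by
    have := hPI x B hxB hPA_B_pos
    rw [cpr, div_eq_iff hPA_B_pos.ne'] at this
    exact this.trans (by rw [hPA_B])
  have hjoint_pos : 0 < joint := hjoint ▸ mul_pos (inv_pos.mpr hcard) (div_pos hB hZ)
  have hpx : 0 < px := hjoint_pos.trans_le (pr_mono hPA Set.inter_subset_left)
  have hqx : 0 < qx := hB.trans_le (pr_mono hP0 hBx)
  have hshare : joint / px = pB / qx := by
    have := hPEI {o | 𝒳 o = B} x hpx
    rwa [cpr, cpr, Set.inter_comm, Set.inter_eq_self_of_subset_left hBx] at this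
  rw [hjoint, div_eq_div_iff hpx.ne' hqx.ne'] at hshare
  field_simp at hshare
  rw [hshare]
  field_simp

lemma exists_const_card_of_connected {P0 : Ω₀ → ℝ} {𝒳 : Ω₀ → Finset K} (c : K → ℝ)
    (hc : ∀ o x, x ∈ 𝒳 o → 0 < P0 o → ((𝒳 o).card : ℝ) = c x)
    (hconn : ∀ x y : K,
      Relation.ReflTransGen (fun a b : K => 0 < pr P0 {o | a ∈ 𝒳 o ∧ b ∈ 𝒳 o}) x y) :
    ∃ k : ℕ, ∀ o, 𝒳 o ≠ ∅ → 0 < P0 o → (𝒳 o).card = k := by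
  have hc_const (x y : K) : c x = c y := by
    induction hconn x y with
    | refl => rfl
    | tail _ hab ih =>
      obtain ⟨o, ⟨ha, hb⟩, ho⟩ := exists_mem_pos_of_pr_pos hab
      rw [ih, ← hc o _ ha ho, hc o _ hb ho]
  by_cases h : ∃ o₀, 𝒳 o₀ ≠ ∅ ∧ 0 < P0 o₀
  · obtain ⟨o₀, hne₀, hpos₀⟩ := h
    obtain ⟨x₀, hx₀⟩ := nonempty_iff_ne_empty.mpr hne₀
    refine ⟨(𝒳 o₀).card, fun o hne ho => ?_⟩
    obtain ⟨x, hx⟩ := nonempty_iff_ne_empty.mpr hne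
    exact_mod_cast (hc o x hx ho).trans ((hc_const x x₀).trans (hc o₀ x₀ hx₀ hpos₀).symm)
  · exact ⟨0, fun o hne ho => (h ⟨o, hne, ho⟩).elim⟩

end SleepingBeauty

theorem stmt5_general {Ω₀ K : Type*} [Fintype Ω₀] [Fintype K] [DecidableEq K]
    (P0 : Ω₀ → ℝ) (𝒳 : Ω₀ → Finset K)
    (hP0 : IsProb P0)
    (hne : pr P0 {o | 𝒳 o = ∅} < 1)
    (hconn : ∀ x y : K,
      Relation.ReflTransGen (fun a b : K => 0 < pr P0 {o | a ∈ 𝒳 o ∧ b ∈ 𝒳 o}) x y)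
    (PA : Ω₀ × Option K → ℝ) (hPA : IsProb PA)
    -- (PI)
    (hPI : ∀ (x : K) (B : Finset K), B ≠ ∅ →
      0 < pr PA {ω | 𝒳 ω.1 = B} →
      cpr PA {ω | ω.2 = some x} {ω | 𝒳 ω.1 = B} = if x ∈ B then (B.card : ℝ)⁻¹ else 0)
    -- (PEI)
    (hPEI : ∀ (F : Set Ω₀) (x : K), 0 < pr PA {ω | ω.2 = some x} →
      cpr PA {ω | ω.1 ∈ F} {ω | ω.2 = some x} = cpr P0 F {o | x ∈ 𝒳 o})
    -- (PP)
    (hPP : ∀ F : Set Ω₀, pr PA {ω | ω.1 ∈ F} = cpr P0 F {o | 𝒳 o ≠ ∅}) :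
    ∃ k : ℕ, cpr P0 {o | (𝒳 o).card = k} {o | 𝒳 o ≠ ∅} = 1 := by
  obtain ⟨hP0_nonneg, hP0_sum⟩ := hP0
  have hZ : 0 < pr P0 {o | 𝒳 o ≠ ∅} := by
    have : pr P0 {o | 𝒳 o = ∅} + pr P0 {o | 𝒳 o ≠ ∅} = 1 := hP0_sum ▸ pr_add_pr_compl _
    linarith
  have hcard (o : Ω₀) (x : K) (hx : x ∈ 𝒳 o) (ho : 0 < P0 o) :
      ((𝒳 o).card : ℝ) = observerRatio P0 𝒳 PA x :=
    card_eq_observerRatio hP0_nonneg hPA.1 hZ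
      (fun x B hx hB => by simpa [hx] using hPI x B (ne_empty_of_mem hx) hB) hPEI hPP hx
      (ho.trans_le (le_pr_of_mem hP0_nonneg rfl))
  obtain ⟨k, hk⟩ := exists_const_card_of_connected _ hcard hconn
  refine ⟨k, ?_⟩
  have hZ_card : pr P0 ({o | (𝒳 o).card = k} ∩ {o | 𝒳 o ≠ ∅}) = pr P0 {o | 𝒳 o ≠ ∅} :=
    pr_inter_of_forall_ne_zero fun o ho h0 => hk o ho ((hP0_nonneg o).lt_of_ne' h0)
  rw [cpr, hZ_card, div_self hZ.ne']

/-- Corollary: if some probability `PA` satisfies (PN), (PI), (PEI) and the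
Principal Principle (PP), and the graph on `K` is connected, then the number
of observers is deterministic given that there are any:
`P(|𝒳| = k | 𝒳 ≠ ∅) = 1` for some `k`. -/
theorem stmt5 {Ω₀ K : Type*} [Fintype Ω₀] [Fintype K] [DecidableEq K]
    (P0 : Ω₀ → ℝ) (𝒳 : Ω₀ → Finset K)
    (hP0 : IsProb P0)
    (hne : pr P0 {o | 𝒳 o = ∅} < 1)
    (hconn : ∀ x y : K,
      Relation.ReflTransGen (fun a b : K => 0 < pr P0 {o | a ∈ 𝒳 o ∧ b ∈ 𝒳 o}) x y)
    (PA : Ω₀ × Option K → ℝ) (hPA : IsProb PA)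
    -- (PN)
    (hPN1 : ∀ F : Set Ω₀, pr P0 F = 0 → pr PA {ω | ω.1 ∈ F} = 0)
    (hPN2 : pr PA {ω | ∃ x : K, ω.2 = some x ∧ x ∈ 𝒳 ω.1} = 1)
    -- (PI)
    (hPI : ∀ (x : K) (B : Finset K), B ≠ ∅ →
      0 < pr PA {ω | 𝒳 ω.1 = B} →
      cpr PA {ω | ω.2 = some x} {ω | 𝒳 ω.1 = B} = if x ∈ B then (B.card : ℝ)⁻¹ else 0)
    -- (PEI)
    (hPEI : ∀ (F : Set Ω₀) (x : K), 0 < pr PA {ω | ω.2 = some x} →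
      cpr PA {ω | ω.1 ∈ F} {ω | ω.2 = some x} = cpr P0 F {o | x ∈ 𝒳 o})
    -- (PP)
    (hPP : ∀ F : Set Ω₀, pr PA {ω | ω.1 ∈ F} = cpr P0 F {o | 𝒳 o ≠ ∅}) :
    ∃ k : ℕ, cpr P0 {o | (𝒳 o).card = k} {o | 𝒳 o ≠ ∅} = 1 :=
  stmt5_general P0 𝒳 hP0 hne hconn PA hPA hPI hPEI hPP
end

section
/- Four Beauties (Pittard): Let W be uniform on {A, B, C, D}, K = {B, C, D}, and 𝒳 = K if W = A, 𝒳 = {W} if W ≠ A. Then for the Thirder measure P_E: P_E(S = x) = 1/3 for each x ∈ K, and P_E(W = A | S = B) = 1/2; while for the Halfer measure P_L: P_L(W = A | S = B) = 1/4. -/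
open scoped Classical
open Finset

/-!
Both measures live on pairs (world, partner), and the events `S = x` and `W = a ∧ S = x` are
sums of atoms. With `Q_x = P(x ∈ 𝒳) = 1/2` and `E|𝒳| = 3/2`, the Thirder measure gives
`P_E(S = x) = Q_x / E|𝒳| = 1/3` and `P_E(W = A | S = B) = P(W = A) / Q_B = 1/2`, the factor
`E|𝒳|⁻¹` cancelling. The Halfer measure splits world `A` over its three partners, so `(A, B)`
has weight `1/12` against `1/4` for `(B, B)`, giving `1/4`.
-/

section OptionProduct

variable {α β : Type*} [Fintype α] [Fintype β] (μ : α × Option β → ℝ)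

theorem pr_snd_eq_some (x : β) : pr μ {ω | ω.2 = some x} = ∑ a, μ (a, some x) := by
  simp [pr, Fintype.sum_prod_type, Fintype.sum_option]

theorem pr_fst_eq_inter_snd_eq_some (a : α) (x : β) :
    pr μ ({ω | ω.1 = a} ∩ {ω | ω.2 = some x}) = μ (a, some x) := by
  simp [pr, Fintype.sum_prod_type, ite_and]

theorem cpr_fst_eq_snd_eq_some (a : α) (x : β) :
    cpr μ {ω | ω.1 = a} {ω | ω.2 = some x} = μ (a, some x) / ∑ a', μ (a', some x) := by
  rw [cpr, pr_fst_eq_inter_snd_eq_some, pr_snd_eq_some]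

end OptionProduct

section Thirder

variable {α β : Type*} [Fintype α] [DecidableEq β] {P0 : α → ℝ} {𝒳 : α → Finset β}
  {PE : α × Option β → ℝ}

theorem sum_thirder_eq
    (hPE : ∀ o x, PE (o, some x) = (ex P0 (fun o' => ((𝒳 o').card : ℝ)))⁻¹ * P0 o *
      (if x ∈ 𝒳 o then 1 else 0)) (x : β) :
    ∑ o, PE (o, some x) = (ex P0 (fun o' => ((𝒳 o').card : ℝ)))⁻¹ * pr P0 {o | x ∈ 𝒳 o} := by
  simp only [hPE, pr, Set.mem_ofPred_eq, Finset.mul_sum]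
  refine Finset.sum_congr rfl fun o _ => ?_
  split_ifs <;> ring

theorem cpr_thirder_eq [Fintype β]
    (hPE : ∀ o x, PE (o, some x) = (ex P0 (fun o' => ((𝒳 o').card : ℝ)))⁻¹ * P0 o *
      (if x ∈ 𝒳 o then 1 else 0))
    (hE : ex P0 (fun o' => ((𝒳 o').card : ℝ)) ≠ 0) (a : α) (x : β) :
    cpr PE {ω | ω.1 = a} {ω | ω.2 = some x} =
      P0 a * (if x ∈ 𝒳 a then 1 else 0) / pr P0 {o | x ∈ 𝒳 o} := by
  rw [cpr_fst_eq_snd_eq_some, sum_thirder_eq hPE, hPE, mul_assoc,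
    mul_div_mul_left _ _ (inv_ne_zero hE)]

end Thirder

/-- The paper's `𝒳`, with the worlds `A, B, C, D` encoded as `0, 1, 2, 3`. -/
def partnerSet (w : Fin 4) : Finset (Fin 4) := if w = 0 then {1, 2, 3} else {w}

theorem ex_card_partnerSet :
    ex (fun _ => (1 / 4 : ℝ)) (fun w => ((partnerSet w).card : ℝ)) = 3 / 2 := by
  norm_num +decide [ex, Fin.sum_univ_four, partnerSet]

theorem pr_mem_partnerSet {x : Fin 4} (hx : x ≠ 0) :
    pr (fun _ => (1 / 4 : ℝ)) {w | x ∈ partnerSet w} = 1 / 2 := by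
  fin_cases x
  · exact absurd rfl hx
  all_goals norm_num +decide [pr, Fin.sum_univ_four, partnerSet]

theorem stmt10_general
    (P0 : Fin 4 → ℝ) (hP0 : ∀ w, P0 w = 1/4)
    (𝒳 : Fin 4 → Finset (Fin 4))
    (h𝒳 : ∀ w, 𝒳 w = if w = 0 then ({1, 2, 3} : Finset (Fin 4)) else {w})
    (PE : Fin 4 × Option (Fin 4) → ℝ)
    (hPE1 : ∀ (o : Fin 4) (x : Fin 4),
      PE (o, some x) = (ex P0 (fun o' => ((𝒳 o').card : ℝ)))⁻¹ * P0 o *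
        (if x ∈ 𝒳 o then 1 else 0))
    (PL : Fin 4 × Option (Fin 4) → ℝ)
    (hPL1 : ∀ (o : Fin 4) (x : Fin 4),
      PL (o, some x) = if x ∈ 𝒳 o then ((𝒳 o).card : ℝ)⁻¹ * P0 o else 0) :
    -- P_E(S = x) = 1/3 for each x ∈ {B, C, D}
    (∀ x : Fin 4, x ≠ 0 → pr PE {ω | ω.2 = some x} = 1/3) ∧
    -- P_E(W = A | S = B) = 1/2
    cpr PE {ω | ω.1 = 0} {ω | ω.2 = some 1} = 1/2 ∧
    -- P_L(W = A | S = B) = 1/4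
    cpr PL {ω | ω.1 = 0} {ω | ω.2 = some 1} = 1/4 := by
  obtain rfl : P0 = fun _ => 1 / 4 := funext hP0
  obtain rfl : 𝒳 = partnerSet := funext h𝒳
  have hE := ex_card_partnerSet
  refine ⟨fun x hx => ?_, ?_, ?_⟩
  · rw [pr_snd_eq_some, sum_thirder_eq hPE1, hE, pr_mem_partnerSet hx]
    norm_num
  · rw [cpr_thirder_eq hPE1 (by norm_num [hE]), pr_mem_partnerSet one_ne_zero]
    norm_num [partnerSet]
  · rw [cpr_fst_eq_snd_eq_some]
    norm_num +decide [hPL1, Fin.sum_univ_four, partnerSet]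

/-- Four Beauties (Pittard). `W` is uniform on `Fin 4` (with `0 = A`,
`1 = B`, `2 = C`, `3 = D`), `K` is the set of possible partners `{1,2,3}`
(modelled inside `Fin 4`), `𝒳 = {1,2,3}` if `W = A` and `𝒳 = {W}` otherwise.
Then `P_E(S = x) = 1/3` for each partner `x`, `P_E(W = A | S = B) = 1/2`,
while `P_L(W = A | S = B) = 1/4`. -/
theorem stmt10
    (P0 : Fin 4 → ℝ) (hP0 : ∀ w, P0 w = 1/4)
    (𝒳 : Fin 4 → Finset (Fin 4))
    (h𝒳 : ∀ w, 𝒳 w = if w = 0 then ({1, 2, 3} : Finset (Fin 4)) else {w})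
    (PE : Fin 4 × Option (Fin 4) → ℝ)
    (hPE1 : ∀ (o : Fin 4) (x : Fin 4),
      PE (o, some x) = (ex P0 (fun o' => ((𝒳 o').card : ℝ)))⁻¹ * P0 o *
        (if x ∈ 𝒳 o then 1 else 0))
    (hPE2 : ∀ o, PE (o, none) = 0)
    (PL : Fin 4 × Option (Fin 4) → ℝ)
    (hPL1 : ∀ (o : Fin 4) (x : Fin 4),
      PL (o, some x) = if x ∈ 𝒳 o then ((𝒳 o).card : ℝ)⁻¹ * P0 o else 0)
    (hPL2 : ∀ o, PL (o, none) = 0) :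
    -- P_E(S = x) = 1/3 for each x ∈ {B, C, D}
    (∀ x : Fin 4, x ≠ 0 → pr PE {ω | ω.2 = some x} = 1/3) ∧
    -- P_E(W = A | S = B) = 1/2
    cpr PE {ω | ω.1 = 0} {ω | ω.2 = some 1} = 1/2 ∧
    -- P_L(W = A | S = B) = 1/4
    cpr PL {ω | ω.1 = 0} {ω | ω.2 = some 1} = 1/4 :=
  stmt10_general P0 hP0 𝒳 h𝒳 PE hPE1 PL hPL1
end

section
/- Presumptuous Philosopher: Let 1 ≤ N ≤ M, K = {1,…,M}, W a Bernoulli(1/2) random variable, and 𝒳 = K if W = 1, 𝒳 = {1,…,N} if W = 0. Then P_E(W = 0) = N/(M+N) and P_L(W = 0) = 1/2. -/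
/-!
Under `P_E` each world is weighted by its number of observers, so `W = 0` and `W = 1` get
weights proportional to `N/2` and `M/2`. Under `P_L` every world has an observer, so
conditioning on `𝒳 ≠ ∅` leaves the prior `1/2` unchanged.
-/

open scoped Classical
open Finset

lemma pr_fst_eq {α β : Type*} [Fintype α] [Fintype β] (μ : α × β → ℝ) (a : α) :
    pr μ {ω | ω.1 = a} = ∑ b, μ (a, b) := by
  simp only [pr, Fintype.sum_prod_type, Set.mem_ofPred_eq]
  rw [Fintype.sum_eq_single a fun x hx => by simp [hx]]
  simp

lemma pr_eq_sum_of_forall_mem {α : Type*} [Fintype α] (μ : α → ℝ) {B : Set α}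
    (hB : ∀ a, a ∈ B) : pr μ B = ∑ a, μ a := by
  simp [pr, hB]

lemma cpr_eq_pr_of_forall_mem {α : Type*} [Fintype α] {μ : α → ℝ} (hμ : ∑ a, μ a = 1)
    (A : Set α) {B : Set α} (hB : ∀ a, a ∈ B) : cpr μ A B = pr μ A := by
  rw [cpr, pr_eq_sum_of_forall_mem μ hB, hμ, div_one, Set.inter_eq_left.mpr fun a _ => hB a]

/-- `PE` reweights each world `w` by its number `#(𝒳 w)` of observers; `none` is "no observer". -/
lemma pr_fst_eq_of_sizeBiased {Ω α : Type*} [Fintype Ω] [Fintype α] [DecidableEq α]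
    (P0 : Ω → ℝ) (𝒳 : Ω → Finset α) (PE : Ω × Option α → ℝ)
    (hPE1 : ∀ (o : Ω) (x : α),
      PE (o, some x) = (ex P0 (fun o' => ((𝒳 o').card : ℝ)))⁻¹ * P0 o *
        (if x ∈ 𝒳 o then 1 else 0))
    (hPE2 : ∀ o, PE (o, none) = 0) (w : Ω) :
    pr PE {ω | ω.1 = w} = P0 w * (𝒳 w).card / ex P0 (fun o => ((𝒳 o).card : ℝ)) := by
  rw [pr_fst_eq, Fintype.sum_option, hPE2, zero_add]
  simp only [hPE1, ← Finset.mul_sum, Finset.sum_boole, Finset.filter_mem_eq_inter,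
    Finset.univ_inter]
  ring

/-- Presumptuous Philosopher. `K = Fin M`, `W ~ Ber(1/2)`, `𝒳 = K` if `W = 1`
and `𝒳 = {1,…,N}` if `W = 0`, with `1 ≤ N ≤ M`. Then
`P_E(W = 0) = N/(M+N)` while `P_L(W = 0) = 1/2`. -/
theorem stmt11 (N M : ℕ) (hN : 1 ≤ N) (hNM : N ≤ M)
    (P0 : Bool → ℝ) (hP0 : ∀ w, P0 w = 1/2)
    (𝒳 : Bool → Finset (Fin M))
    (h𝒳1 : 𝒳 true = Finset.univ)
    (h𝒳0 : 𝒳 false = Finset.univ.filter (fun i : Fin M => i.val < N))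
    (PE : Bool × Option (Fin M) → ℝ)
    (hPE1 : ∀ (o : Bool) (x : Fin M),
      PE (o, some x) = (ex P0 (fun o' => ((𝒳 o').card : ℝ)))⁻¹ * P0 o *
        (if x ∈ 𝒳 o then 1 else 0))
    (hPE2 : ∀ o, PE (o, none) = 0) :
    -- P_E(W = 0) = N/(M+N)
    pr PE {ω | ω.1 = false} = (N : ℝ) / (M + N) ∧
    -- P_L(W = 0) = P(W = 0 | 𝒳 ≠ ∅) = 1/2
    cpr P0 {w | w = false} {w | 𝒳 w ≠ ∅} = 1/2 := by
  have hcard_false : (𝒳 false).card = N := by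
    rw [h𝒳0, Fin.card_filter_val_lt, min_eq_right hNM]
  have hcard_true : (𝒳 true).card = M := by simp [h𝒳1]
  have hex : ex P0 (fun o => ((𝒳 o).card : ℝ)) = (M + N) / 2 := by
    simp only [ex, Fintype.sum_bool, hcard_false, hcard_true, hP0]
    ring
  have h𝒳_ne : ∀ w, 𝒳 w ≠ ∅ := by
    intro w
    rw [← Finset.nonempty_iff_ne_empty, ← Finset.card_pos]
    cases w <;> omega
  refine ⟨?_, ?_⟩
  · have hMN : (M + N : ℝ) ≠ 0 := by positivity
    rw [pr_fst_eq_of_sizeBiased P0 𝒳 PE hPE1 hPE2, hex, hcard_false, hP0]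
    field_simp
  · have hP0_sum : ∑ w, P0 w = 1 := by simp only [Fintype.sum_bool, hP0]; norm_num
    rw [cpr_eq_pr_of_forall_mem (B := {w | 𝒳 w ≠ ∅}) hP0_sum _ h𝒳_ne]
    simp [pr, hP0]
end

section
/- Technicolour Beauty under P_L: With Z and L_y as above, for every objective event F, P_L(F ∩ {Z_S = y}) = E[1_F L_y / X | X ≥ 1], where X = |𝒳|, and hence P_L(F | Z_S = y) = E[1_F L_y X^{-1} | X ≥ 1] / E[L_y X^{-1} | X ≥ 1] whenever the denominator is positive. -/
open scoped Classical
open Finset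

/-! Under `P_L` each centred world `(o, x)` with `x ∈ 𝒳 o` carries the weight `P0 o / |𝒳 o|`
(renormalised by `P0(𝒳 ≠ ∅)`), so the mass of `{Z_S = y}` inside the world `o` is that weight
times the number `L_y o` of awakenings of colour `y`. Summing over the worlds of `F` gives the
first identity; the conditional one is its quotient by the case `F = univ`. -/

theorem pr_exists_some_eq_sum {Ω₀ K : Type*} [Fintype Ω₀] [Fintype K]
    (μ : Ω₀ × Option K → ℝ) (E : Ω₀ → K → Prop) [∀ o, DecidablePred (E o)] :
    pr μ {ω | ∃ x, ω.2 = some x ∧ E ω.1 x} = ∑ o, ∑ x with E o x, μ (o, some x) := by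
  rw [pr, Fintype.sum_prod_type]
  refine Finset.sum_congr rfl fun o _ => ?_
  simp [Fintype.sum_option, Finset.sum_filter]

theorem pr_objective_inter_colour_eq {Ω₀ K 𝒵 : Type*} [Fintype Ω₀] [Fintype K] [DecidableEq K]
    (P0 : Ω₀ → ℝ) (𝒳 : Ω₀ → Finset K) (Z : Ω₀ → K → 𝒵) (L : 𝒵 → Ω₀ → ℕ)
    (hL : ∀ (y : 𝒵) (o : Ω₀), L y o = ((𝒳 o).filter (fun x => Z o x = y)).card)
    (PL : Ω₀ × Option K → ℝ)
    (hPL1 : ∀ (o : Ω₀) (x : K),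
      PL (o, some x) =
        if x ∈ 𝒳 o then ((𝒳 o).card : ℝ)⁻¹ * P0 o / pr P0 {o' | 𝒳 o' ≠ ∅} else 0)
    (F : Set Ω₀) (y : 𝒵) :
    pr PL ({ω | ω.1 ∈ F} ∩ {ω | ∃ x : K, ω.2 = some x ∧ x ∈ 𝒳 ω.1 ∧ Z ω.1 x = y})
      = ex P0 (fun o => if 𝒳 o ≠ ∅ ∧ o ∈ F then (L y o : ℝ) / ((𝒳 o).card : ℝ) else 0)
          / pr P0 {o | 𝒳 o ≠ ∅} := by
  have hset : {ω : Ω₀ × Option K | ω.1 ∈ F} ∩ {ω | ∃ x, ω.2 = some x ∧ x ∈ 𝒳 ω.1 ∧ Z ω.1 x = y}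
      = {ω | ∃ x, ω.2 = some x ∧ (ω.1 ∈ F ∧ x ∈ 𝒳 ω.1 ∧ Z ω.1 x = y)} := by
    ext ⟨o, x⟩
    simp only [Set.mem_inter_iff, Set.mem_ofPred_eq]
    tauto
  rw [hset, pr_exists_some_eq_sum PL fun o x => o ∈ F ∧ x ∈ 𝒳 o ∧ Z o x = y, ex, Finset.sum_div]
  refine Finset.sum_congr rfl fun o _ => ?_
  by_cases hF : o ∈ F
  · have hfilter : univ.filter (fun x => o ∈ F ∧ x ∈ 𝒳 o ∧ Z o x = y)
        = (𝒳 o).filter (fun x => Z o x = y) := by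
      ext x
      simp [hF]
    rw [hfilter, Finset.sum_congr rfl fun x _ => hPL1 o x, Finset.sum_ite_mem,
      Finset.inter_eq_left.mpr (Finset.filter_subset _ _), Finset.sum_const, nsmul_eq_mul, ← hL]
    by_cases he : 𝒳 o = ∅
    · simp [he]
    · simp only [ne_eq, he, not_false_eq_true, hF, and_self, ite_true]
      ring
  · simp [hF]

theorem stmt13_general {Ω₀ K 𝒵 : Type*} [Fintype Ω₀] [Fintype K] [DecidableEq K]
    (P0 : Ω₀ → ℝ) (𝒳 : Ω₀ → Finset K)
    (Z : Ω₀ → K → 𝒵)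
    (L : 𝒵 → Ω₀ → ℕ)
    (hL : ∀ (y : 𝒵) (o : Ω₀), L y o = ((𝒳 o).filter (fun x => Z o x = y)).card)
    (PL : Ω₀ × Option K → ℝ)
    (hPL1 : ∀ (o : Ω₀) (x : K),
      PL (o, some x) =
        if x ∈ 𝒳 o then ((𝒳 o).card : ℝ)⁻¹ * P0 o / pr P0 {o' | 𝒳 o' ≠ ∅} else 0) :
    ∀ (F : Set Ω₀) (y : 𝒵),
      pr PL ({ω | ω.1 ∈ F} ∩ {ω | ∃ x : K, ω.2 = some x ∧ x ∈ 𝒳 ω.1 ∧ Z ω.1 x = y})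
        = ex P0 (fun o => if 𝒳 o ≠ ∅ ∧ o ∈ F then (L y o : ℝ) / ((𝒳 o).card : ℝ) else 0)
            / pr P0 {o | 𝒳 o ≠ ∅} ∧
      (0 < ex P0 (fun o => if 𝒳 o ≠ ∅ then (L y o : ℝ) / ((𝒳 o).card : ℝ) else 0)
            / pr P0 {o | 𝒳 o ≠ ∅} →
        cpr PL {ω | ω.1 ∈ F} {ω | ∃ x : K, ω.2 = some x ∧ x ∈ 𝒳 ω.1 ∧ Z ω.1 x = y}
          = (ex P0 (fun o => if 𝒳 o ≠ ∅ ∧ o ∈ F then (L y o : ℝ) / ((𝒳 o).card : ℝ) else 0)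
                / pr P0 {o | 𝒳 o ≠ ∅})
            / (ex P0 (fun o => if 𝒳 o ≠ ∅ then (L y o : ℝ) / ((𝒳 o).card : ℝ) else 0)
                / pr P0 {o | 𝒳 o ≠ ∅})) := by
  intro F y
  have key := pr_objective_inter_colour_eq P0 𝒳 Z L hL PL hPL1
  refine ⟨key F y, fun _ => ?_⟩
  have hcolour := key Set.univ y
  simp only [Set.mem_univ, Set.ofPred_true, Set.univ_inter, and_true] at hcolour
  rw [cpr, key F y, hcolour]

/-- Technicolour Beauty under the Halfer measure `P_L`: with `X = |𝒳|`,
`P_L(F ∩ {Z_S = y}) = E[1_F L_y / X | X ≥ 1]` for every objective `F`, and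
hence `P_L(F | Z_S = y) = E[1_F L_y X⁻¹ | X ≥ 1] / E[L_y X⁻¹ | X ≥ 1]`
whenever the denominator is positive. -/
theorem stmt13 {Ω₀ K 𝒵 : Type*} [Fintype Ω₀] [Fintype K] [DecidableEq K] [Fintype 𝒵]
    (P0 : Ω₀ → ℝ) (𝒳 : Ω₀ → Finset K)
    (hP0 : IsProb P0)
    (hpos : 0 < pr P0 {o | 𝒳 o ≠ ∅})
    (Z : Ω₀ → K → 𝒵)
    (L : 𝒵 → Ω₀ → ℕ)
    (hL : ∀ (y : 𝒵) (o : Ω₀), L y o = ((𝒳 o).filter (fun x => Z o x = y)).card)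
    (PL : Ω₀ × Option K → ℝ)
    (hPL1 : ∀ (o : Ω₀) (x : K),
      PL (o, some x) =
        if x ∈ 𝒳 o then ((𝒳 o).card : ℝ)⁻¹ * P0 o / pr P0 {o' | 𝒳 o' ≠ ∅} else 0)
    (hPL2 : ∀ o : Ω₀, PL (o, none) = 0) :
    ∀ (F : Set Ω₀) (y : 𝒵),
      pr PL ({ω | ω.1 ∈ F} ∩ {ω | ∃ x : K, ω.2 = some x ∧ x ∈ 𝒳 ω.1 ∧ Z ω.1 x = y})
        = ex P0 (fun o => if 𝒳 o ≠ ∅ ∧ o ∈ F then (L y o : ℝ) / ((𝒳 o).card : ℝ) else 0)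
            / pr P0 {o | 𝒳 o ≠ ∅} ∧
      (0 < ex P0 (fun o => if 𝒳 o ≠ ∅ then (L y o : ℝ) / ((𝒳 o).card : ℝ) else 0)
            / pr P0 {o | 𝒳 o ≠ ∅} →
        cpr PL {ω | ω.1 ∈ F} {ω | ∃ x : K, ω.2 = some x ∧ x ∈ 𝒳 ω.1 ∧ Z ω.1 x = y}
          = (ex P0 (fun o => if 𝒳 o ≠ ∅ ∧ o ∈ F then (L y o : ℝ) / ((𝒳 o).card : ℝ) else 0)
                / pr P0 {o | 𝒳 o ≠ ∅})
            / (ex P0 (fun o => if 𝒳 o ≠ ∅ then (L y o : ℝ) / ((𝒳 o).card : ℝ) else 0)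
                / pr P0 {o | 𝒳 o ≠ ∅})) :=
  stmt13_general P0 𝒳 Z L hL PL hPL1
end

section
/- Hartle–Srednicki model correct computation: Let U be uniform on {AR, SR}; if U = AR all N cycles are red, if U = SR exactly M of N cycles are red (uniformly among arrangements); each cycle independently contains observers with probability p. With Z_S the colour seen by a randomly located observer, the Thirder measure satisfies P_E(U = SR | Z_S = R) = M/(M+N). -/
open scoped Classical
open Finset

/-!
Under the Thirder measure an outcome is weighted by its number of observers, so conditioning on
seeing red gives `P_E(SR | R) = E[1_SR L_R] / E[L_R]`, the normalising constant `E[#𝒳]` cancelling.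
Occupation is i.i.d. Bernoulli `p` and independent of the colouring, so given the red set `A` the
expected number of observers seeing red is `p · #A`. Averaging over `A` gives `p N` under AR and
`p M` under SR, hence `E[1_SR L_R] = p M / 2` and `E[L_R] = p (M + N) / 2`.
-/

section Bernoulli

variable {ι : Type*} [Fintype ι] [DecidableEq ι]

noncomputable def bernoulliWeight (p : ℝ) (ξ : ι → Bool) : ℝ :=
  ∏ i, if ξ i then p else 1 - p

theorem sum_bernoulliWeight_mul_indicator (p : ℝ) (i : ι) :
    ∑ ξ : ι → Bool, bernoulliWeight p ξ * (if ξ i then 1 else 0) = p := by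
  -- absorbing the indicator into the `i`-th factor makes the sum over `ξ` factorise
  have hfactor : ∀ ξ : ι → Bool, bernoulliWeight p ξ * (if ξ i then 1 else 0) =
      ∏ j, (if ξ j then p else 1 - p) * (if j = i then (if ξ j then 1 else 0) else 1) := by
    intro ξ
    rw [prod_mul_distrib, prod_ite_eq', if_pos (mem_univ i), bernoulliWeight]
  have hmarginal : ∀ j, ∑ b : Bool, (if b then p else 1 - p) *
      (if j = i then (if b then 1 else 0) else 1) = if j = i then p else 1 := by
    intro j
    split_ifs <;> simp
  simp_rw [hfactor]
  rw [← Fintype.prod_sum fun j (b : Bool) =>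
    (if b then p else 1 - p) * if j = i then (if b then 1 else 0) else 1]
  simp_rw [hmarginal, prod_ite_eq', if_pos (mem_univ i)]

theorem sum_bernoulliWeight_mul_card_filter (p : ℝ) (S : Finset ι) :
    ∑ ξ : ι → Bool, bernoulliWeight p ξ * #{i ∈ S | ξ i} = p * #S := by
  simp_rw [← sum_boole, mul_sum]
  rw [sum_comm, sum_congr rfl fun i _ => sum_bernoulliWeight_mul_indicator p i, sum_const,
    nsmul_eq_mul, mul_comm]

end Bernoulli

section Observers

variable {Ω ι : Type*} [Fintype Ω] [Fintype ι] [DecidableEq ι]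

theorem pr_eq_mul_sum_card_observers (P0 : Ω → ℝ) (𝒳 : Ω → Finset ι) (c : ℝ)
    (PE : Ω × Option ι → ℝ)
    (hsome : ∀ o x, PE (o, some x) = c * P0 o * if x ∈ 𝒳 o then 1 else 0)
    (hnone : ∀ o, PE (o, none) = 0) (S : Set (Ω × Option ι)) :
    pr PE S = c * ∑ o, P0 o * #{x ∈ 𝒳 o | (o, some x) ∈ S} := by
  rw [pr, Fintype.sum_prod_type, mul_sum]
  refine sum_congr rfl fun o _ => ?_
  rw [Fintype.sum_option, hnone, ← sum_boole, mul_sum, mul_sum, ← univ_inter (𝒳 o),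
    ← sum_ite_mem]
  simp only [hsome, ite_self, zero_add]
  refine sum_congr rfl fun x _ => ?_
  split_ifs <;> simp

end Observers

section HartleSrednicki

variable {N M : ℕ}

noncomputable def redSetPrior (N M : ℕ) (u : Bool) (A : Finset (Fin N)) : ℝ :=
  if u then (if A = Finset.univ then 1 else 0)
  else (if A.card = M then ((N.choose M : ℝ))⁻¹ else 0)

theorem sum_redSetPrior_mul (hM : M ≤ N) (u : Bool) (g : ℕ → ℝ) :
    ∑ A, redSetPrior N M u A * g #A = g (bif u then N else M) := by
  cases u
  · have hchoose : (N.choose M : ℝ) ≠ 0 := by exact_mod_cast (Nat.choose_pos hM).ne'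
    have hcard : #{A : Finset (Fin N) | #A = M} = N.choose M := by
      rw [← powerset_univ, ← powersetCard_eq_filter, card_powersetCard, card_univ,
        Fintype.card_fin]
    simp only [redSetPrior, Bool.false_eq_true, if_false, ite_mul, zero_mul]
    rw [sum_ite, sum_const_zero, add_zero, sum_congr rfl fun A hA => by rw [(mem_filter.1 hA).2],
      sum_const, hcard, nsmul_eq_mul, ← mul_assoc, mul_inv_cancel₀ hchoose, one_mul, cond_false]
  · simp [redSetPrior]

noncomputable def hsWeight (N M : ℕ) (p : ℝ) (o : Bool × Finset (Fin N) × (Fin N → Bool)) : ℝ :=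
  1/2 * redSetPrior N M o.1 o.2.1 * bernoulliWeight p o.2.2

theorem sum_hsWeight_mul_card_filter (hM : M ≤ N) (p : ℝ) (φ : Bool → ℝ)
    (T : Finset (Fin N) → Finset (Fin N)) (g : ℕ → ℕ) (hT : ∀ A, #(T A) = g #A) :
    ∑ o, hsWeight N M p o * (φ o.1 * #{i ∈ T o.2.1 | o.2.2 i}) =
      1/2 * p * (φ true * g N + φ false * g M) := by
  have htheory : ∀ u, ∑ A, ∑ ξ, hsWeight N M p (u, A, ξ) * (φ u * #{i ∈ T A | ξ i}) =
      1/2 * p * φ u * g (bif u then N else M) := by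
    intro u
    have hsplit : ∀ A ξ, hsWeight N M p (u, A, ξ) * (φ u * #{i ∈ T A | ξ i}) =
        1/2 * φ u * (redSetPrior N M u A * (bernoulliWeight p ξ * #{i ∈ T A | ξ i})) := by
      intro A ξ
      simp only [hsWeight]
      ring
    simp_rw [hsplit, ← mul_sum, sum_bernoulliWeight_mul_card_filter, hT]
    rw [sum_redSetPrior_mul hM u fun n => p * g n]
    ring
  simp only [Fintype.sum_prod_type, Fintype.sum_bool, htheory, cond_true, cond_false]
  ring

end HartleSrednicki

/-- An outcome `(u, A, ξ)` records the theory (`u = true` is AR, `u = false` is SR), the set `A`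
of red cycles and the occupation variables `ξ`; `PE` pairs it with the cycle of the randomly
located observer. -/
theorem stmt17_general (N Mr : ℕ) (hMN : Mr + 1 ≤ N)
    (p : ℝ) (hp0 : 0 < p)
    (P0 : Bool × Finset (Fin N) × (Fin N → Bool) → ℝ)
    (hP0 : ∀ (u : Bool) (A : Finset (Fin N)) (ξ : Fin N → Bool),
      P0 (u, A, ξ) =
        (1/2) *
        (if u then (if A = Finset.univ then 1 else 0)
         else (if A.card = Mr then ((N.choose Mr : ℝ))⁻¹ else 0)) *
        ∏ i, (if ξ i then p else 1 - p))
    (𝒳 : Bool × Finset (Fin N) × (Fin N → Bool) → Finset (Fin N))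
    (h𝒳 : ∀ o, 𝒳 o = Finset.univ.filter (fun i : Fin N => o.2.2 i = true))
    (PE : (Bool × Finset (Fin N) × (Fin N → Bool)) × Option (Fin N) → ℝ)
    (hPE1 : ∀ (o : Bool × Finset (Fin N) × (Fin N → Bool)) (x : Fin N),
      PE (o, some x) = (ex P0 (fun o' => ((𝒳 o').card : ℝ)))⁻¹ * P0 o *
        (if x ∈ 𝒳 o then 1 else 0))
    (hPE2 : ∀ o, PE (o, none) = 0) :
    -- conditionally on seeing red, the Thirder credence in SR is M/(M+N)
    cpr PE {ω | ω.1.1 = false}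
      {ω | ∃ i : Fin N, ω.2 = some i ∧ i ∈ 𝒳 ω.1 ∧ i ∈ ω.1.2.1}
      = (Mr : ℝ) / (Mr + N) := by
  have hM : Mr ≤ N := by omega
  obtain rfl : P0 = hsWeight N Mr p := funext fun ⟨u, A, ξ⟩ => hP0 u A ξ
  set c := ex (hsWeight N Mr p) fun o => (#(𝒳 o) : ℝ)
  have hpr := pr_eq_mul_sum_card_observers (hsWeight N Mr p) 𝒳 c⁻¹ PE hPE1 hPE2
  have hc : c = p * N := by
    refine (Fintype.sum_congr _ _ fun o => ?_).trans <|
      (sum_hsWeight_mul_card_filter hM p (fun _ => 1) (fun _ => univ) (fun _ => N) fun _ => by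
        simp).trans (by ring)
    simp [h𝒳]
  have hnum : pr PE ({ω | ω.1.1 = false} ∩
      {ω | ∃ i : Fin N, ω.2 = some i ∧ i ∈ 𝒳 ω.1 ∧ i ∈ ω.1.2.1}) = c⁻¹ * (1/2 * p * Mr) := by
    rw [hpr]
    refine congrArg _ <| (Fintype.sum_congr _ _ fun o => ?_).trans <|
      (sum_hsWeight_mul_card_filter hM p (fun u => bif u then 0 else 1) id id fun _ => rfl).trans
        (by simp)
    rcases o with ⟨_ | _, A, ξ⟩
    · rw [cond_false, one_mul]
      congr 3
      ext x
      simp [h𝒳, and_comm]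
    · simp
  have hden : pr PE {ω | ∃ i : Fin N, ω.2 = some i ∧ i ∈ 𝒳 ω.1 ∧ i ∈ ω.1.2.1} =
      c⁻¹ * (1/2 * p * (N + Mr)) := by
    rw [hpr]
    refine congrArg _ <| (Fintype.sum_congr _ _ fun o => ?_).trans <|
      (sum_hsWeight_mul_card_filter hM p (fun _ => 1) id id fun _ => rfl).trans (by simp)
    rw [one_mul]
    congr 3
    ext x
    simp [h𝒳, and_comm]
  have hN : (0 : ℝ) < N := by exact_mod_cast (show 0 < N by omega)
  rw [cpr, hnum, hden, hc]
  field_simp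
  ring

/-- Hartle–Srednicki model, correct computation. The objective space is
`Bool × Finset (Fin N) × (Fin N → Bool)`: the theory `U` (`true = AR`,
`false = SR`), the set `A` of red cycles (all of `Fin N` under AR; a uniformly
chosen `M`-subset under SR), and the occupation variables `ξ` (i.i.d.
Bernoulli `p`). For the Thirder measure, `P_E(U = SR | Z_S = R) = M/(M+N)`. -/
theorem stmt17 (N Mr : ℕ) (hM1 : 1 ≤ Mr) (hMN : Mr + 1 ≤ N)
    (p : ℝ) (hp0 : 0 < p) (hp1 : p < 1)
    (P0 : Bool × Finset (Fin N) × (Fin N → Bool) → ℝ)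
    (hP0 : ∀ (u : Bool) (A : Finset (Fin N)) (ξ : Fin N → Bool),
      P0 (u, A, ξ) =
        (1/2) *
        (if u then (if A = Finset.univ then 1 else 0)
         else (if A.card = Mr then ((N.choose Mr : ℝ))⁻¹ else 0)) *
        ∏ i, (if ξ i then p else 1 - p))
    (𝒳 : Bool × Finset (Fin N) × (Fin N → Bool) → Finset (Fin N))
    (h𝒳 : ∀ o, 𝒳 o = Finset.univ.filter (fun i : Fin N => o.2.2 i = true))
    (PE : (Bool × Finset (Fin N) × (Fin N → Bool)) × Option (Fin N) → ℝ)
    (hPE1 : ∀ (o : Bool × Finset (Fin N) × (Fin N → Bool)) (x : Fin N),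
      PE (o, some x) = (ex P0 (fun o' => ((𝒳 o').card : ℝ)))⁻¹ * P0 o *
        (if x ∈ 𝒳 o then 1 else 0))
    (hPE2 : ∀ o, PE (o, none) = 0) :
    -- conditionally on seeing red, the Thirder credence in SR is M/(M+N)
    cpr PE {ω | ω.1.1 = false}
      {ω | ∃ i : Fin N, ω.2 = some i ∧ i ∈ 𝒳 ω.1 ∧ i ∈ ω.1.2.1}
      = (Mr : ℝ) / (Mr + N) :=
  stmt17_general N Mr hMN p hp0 P0 hP0 𝒳 h𝒳 PE hPE1 hPE2
end
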